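/- Let A ∈ ℝ^{m×n}, x* ∈ ℝⁿ, y = A x*, T ⊆ {1,...,n}. Suppose the only δ ∈ ℝⁿ with Aδ = 0 and δ_{Tᶜ} = 0 is δ = 0 on T as well (i.e., A restricted to columns in T is injective), and suppose that for every nonzero δ in the null space of A with δ_{Tᶜ} ≠ 0, the normalized vector δ/‖δ‖₁ fails at least one of the sign-pattern/positivity conditions of Theorem 1 or satisfies ∑_{k ∈ Tᶜ\I} |δ_k| > ∑_{k ∈ I} |δ_k| for its associated I = {k ∈ Δ : sign(x*_k) = sign(δ_k)}. Then every solution x† of Ax = y with ‖x†_{Tᶜ}‖₁ = ‖x*_{Tᶜ}‖₁ and x† ≠ x* leads to a contradiction; hence x* is the unique minimizer of the modified-CS program. -/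

import Mathlib

/-!
Write a competitor as `x† = x* - δ` with `Aδ = 0`, `δ ≠ 0`. Injectivity of `A` on the columns
in `T` forces `δ` to be nonzero somewhere off `T`. For the associated set `I` the sign-pattern
conditions of Theorem 1 hold automatically, so the hypothesis gives
`∑_{I} |δ_k| < ∑_{Tᶜ \ I} |δ_k|`. Off `I`, `x*_k` and `δ_k` have opposite signs, so
`|x†_k| = |x*_k| + |δ_k|`, while on `I` only `|x†_k| ≥ |x*_k| - |δ_k|`; summing over `Tᶜ`
shows that `‖x†_{Tᶜ}‖₁` strictly exceeds `‖x*_{Tᶜ}‖₁`.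
-/

open Finset

namespace Real

theorem mul_pos_iff_sign_eq {a b : ℝ} (ha : a ≠ 0) : 0 < a * b ↔ sign a = sign b := by
  rcases ha.lt_or_gt with ha | ha <;> rcases lt_trichotomy b 0 with hb | hb | hb <;>
    norm_num [sign_of_neg, sign_of_pos, mul_pos_iff, ha, hb, ha.not_gt, hb.not_gt]

theorem sign_div_of_pos (b : ℝ) {c : ℝ} (hc : 0 < c) : sign (b / c) = sign b := by
  rcases lt_trichotomy b 0 with hb | rfl | hb
  · rw [sign_of_neg hb, sign_of_neg (div_neg_of_neg_of_pos hb hc)]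
  · simp
  · rw [sign_of_pos hb, sign_of_pos (div_pos hb hc)]

end Real

section SignPattern

variable {ι : Type*} {x η : ι → ℝ} {T I : Finset ι}

theorem mul_pos_of_mem_of_mem_iff_sign_eq
    (hI : ∀ k, k ∈ I ↔ (x k ≠ 0 ∧ k ∉ T ∧ Real.sign (x k) = Real.sign (η k)))
    {k : ι} (hk : k ∈ I) : 0 < η k * x k :=
  let ⟨hx, _, hsign⟩ := (hI k).1 hk
  mul_comm (x k) _ ▸ (Real.mul_pos_iff_sign_eq hx).2 hsign

theorem mul_nonpos_of_not_mem_of_mem_iff_sign_eq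
    (hI : ∀ k, k ∈ I ↔ (x k ≠ 0 ∧ k ∉ T ∧ Real.sign (x k) = Real.sign (η k)))
    {k : ι} (hkT : k ∉ T) (hkI : k ∉ I) : η k * x k ≤ 0 := by
  by_cases hx : x k = 0
  · simp [hx]
  · rw [mul_comm, ← not_lt, Real.mul_pos_iff_sign_eq hx]
    exact fun hsign => hkI ((hI k).2 ⟨hx, hkT, hsign⟩)

end SignPattern

section L1

variable {ι : Type*}

theorem abs_sub_eq_abs_add_abs_of_mul_nonpos {a b : ℝ} (h : a * b ≤ 0) :
    |a - b| = |a| + |b| := by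
  rw [sub_eq_add_neg, ← abs_neg b]
  refine (abs_add_eq_add_abs_iff a (-b)).2 ?_
  rw [neg_nonneg, neg_nonpos]
  rcases mul_nonpos_iff.1 h with h | h
  exacts [Or.inl h, Or.inr h]

theorem sum_abs_add_le_sum_abs_sub [DecidableEq ι] {s t : Finset ι} (hst : s ⊆ t)
    {x δ : ι → ℝ} (hopp : ∀ k ∈ t \ s, δ k * x k ≤ 0) :
    ∑ k ∈ t, |x k| + (∑ k ∈ t \ s, |δ k| - ∑ k ∈ s, |δ k|) ≤ ∑ k ∈ t, |x k - δ k| := by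
  have hout : ∑ k ∈ t \ s, (|x k| + |δ k|) = ∑ k ∈ t \ s, |x k - δ k| :=
    sum_congr rfl fun k hk => (abs_sub_eq_abs_add_abs_of_mul_nonpos ((mul_comm _ _).trans_le (hopp k hk))).symm
  have hin : ∑ k ∈ s, (|x k| - |δ k|) ≤ ∑ k ∈ s, |x k - δ k| :=
    sum_le_sum fun k _ => abs_sub_abs_le_abs_sub _ _
  rw [sum_add_distrib] at hout
  rw [sum_sub_distrib] at hin
  rw [← sum_sdiff hst, ← sum_sdiff hst (f := fun k => |x k - δ k|)]
  linarith

variable [Fintype ι]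

theorem sum_abs_pos_of_ne_zero {δ : ι → ℝ} (hδ : δ ≠ 0) : 0 < ∑ j, |δ j| := by
  obtain ⟨k, hk⟩ := Function.ne_iff.1 hδ
  exact sum_pos' (fun j _ => abs_nonneg _) ⟨k, mem_univ k, abs_pos.2 hk⟩

noncomputable def l1Normalize (δ : ι → ℝ) : ι → ℝ := fun k => δ k / ∑ j, |δ j|

theorem sum_abs_l1Normalize (s : Finset ι) (δ : ι → ℝ) :
    ∑ k ∈ s, |l1Normalize δ k| = (∑ k ∈ s, |δ k|) / ∑ j, |δ j| := by
  rw [sum_div]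
  refine sum_congr rfl fun k _ => ?_
  rw [l1Normalize, abs_div, abs_of_nonneg (sum_nonneg fun j _ => abs_nonneg (δ j))]

theorem sum_abs_l1Normalize_univ {δ : ι → ℝ} (hδ : δ ≠ 0) : ∑ k, |l1Normalize δ k| = 1 := by
  rw [sum_abs_l1Normalize, div_self (sum_abs_pos_of_ne_zero hδ).ne']

theorem sign_l1Normalize {δ : ι → ℝ} (hδ : δ ≠ 0) (k : ι) :
    Real.sign (l1Normalize δ k) = Real.sign (δ k) :=
  Real.sign_div_of_pos _ (sum_abs_pos_of_ne_zero hδ)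

theorem l1Normalize_sign_pattern {x δ : ι → ℝ} {T I : Finset ι} (hδ : δ ≠ 0)
    (hI : ∀ k, k ∈ I ↔ (x k ≠ 0 ∧ k ∉ T ∧ Real.sign (x k) = Real.sign (δ k))) :
    (∑ j, |l1Normalize δ j|) = 1 ∧ (∀ k ∈ I, l1Normalize δ k * x k > 0) ∧
      (∀ k, x k ≠ 0 → k ∉ T → k ∉ I → l1Normalize δ k * x k ≤ 0) := by
  simp only [← sign_l1Normalize hδ] at hI
  exact ⟨sum_abs_l1Normalize_univ hδ, fun k hk => mul_pos_of_mem_of_mem_iff_sign_eq hI hk,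
    fun k _ hkT hkI => mul_nonpos_of_not_mem_of_mem_iff_sign_eq hI hkT hkI⟩

end L1

/-- uniqueness of the modified-CS minimizer from the strict-increase
condition along normalized null-space directions. -/
theorem stmt_12 {m n : ℕ} (A : Matrix (Fin m) (Fin n) ℝ) (xstar : Fin n → ℝ)
    (T : Finset (Fin n))
    (hinj : ∀ δ : Fin n → ℝ, A.mulVec δ = 0 → (∀ k ∈ Tᶜ, δ k = 0) → δ = 0)
    (hcond : ∀ δ : Fin n → ℝ, A.mulVec δ = 0 → δ ≠ 0 → (∃ k ∈ Tᶜ, δ k ≠ 0) →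
      ∀ η : Fin n → ℝ, η = (fun k => δ k / ∑ j, |δ j|) →
      ∀ I : Finset (Fin n),
        (∀ k, k ∈ I ↔ (xstar k ≠ 0 ∧ k ∉ T ∧ Real.sign (xstar k) = Real.sign (η k))) →
        (¬ ((∑ j, |η j|) = 1 ∧ (∀ k ∈ I, η k * xstar k > 0) ∧
              (∀ k, xstar k ≠ 0 → k ∉ T → k ∉ I → η k * xstar k ≤ 0))
          ∨ ∑ k ∈ I, |η k| < ∑ k ∈ Tᶜ \ I, |η k|)) :
    (∀ xdag : Fin n → ℝ, A.mulVec xdag = A.mulVec xstar → xdag ≠ xstar →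
        ∑ k ∈ Tᶜ, |xdag k| = ∑ k ∈ Tᶜ, |xstar k| → False) ∧
    (∀ xdag : Fin n → ℝ, A.mulVec xdag = A.mulVec xstar → xdag ≠ xstar →
        ∑ k ∈ Tᶜ, |xstar k| < ∑ k ∈ Tᶜ, |xdag k|) := by
  have hlt : ∀ xdag : Fin n → ℝ, A.mulVec xdag = A.mulVec xstar → xdag ≠ xstar →
      ∑ k ∈ Tᶜ, |xstar k| < ∑ k ∈ Tᶜ, |xdag k| := by
    intro xdag hA hne
    obtain ⟨δ, rfl⟩ : ∃ δ, xdag = xstar - δ := ⟨xstar - xdag, (sub_sub_cancel _ _).symm⟩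
    have hδA : A.mulVec δ = 0 := by
      rwa [Matrix.mulVec_sub, sub_eq_self] at hA
    have hδ : δ ≠ 0 := fun h => hne (by rw [h, sub_zero])
    have hδT : ∃ k ∈ Tᶜ, δ k ≠ 0 := by
      by_contra! h
      exact hδ (hinj δ hδA h)
    set I := univ.filter fun k =>
      xstar k ≠ 0 ∧ k ∉ T ∧ Real.sign (xstar k) = Real.sign (δ k)
    have hI : ∀ k, k ∈ I ↔ (xstar k ≠ 0 ∧ k ∉ T ∧ Real.sign (xstar k) = Real.sign (δ k)) := by
      simp [I]
    have hmass : ∑ k ∈ I, |δ k| < ∑ k ∈ Tᶜ \ I, |δ k| := by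
      have hη := (hcond δ hδA hδ hδT (l1Normalize δ) rfl I (by simpa only [sign_l1Normalize hδ]
        using hI)).resolve_left (not_not.2 (l1Normalize_sign_pattern hδ hI))
      rwa [sum_abs_l1Normalize, sum_abs_l1Normalize,
        div_lt_div_iff_of_pos_right (sum_abs_pos_of_ne_zero hδ)] at hη
    have hIT : I ⊆ Tᶜ := fun k hk => mem_compl.2 ((hI k).1 hk).2.1
    have hgain := sum_abs_add_le_sum_abs_sub hIT fun k hk =>
      mul_nonpos_of_not_mem_of_mem_iff_sign_eq hI (mem_compl.1 (mem_sdiff.1 hk).1)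
        (mem_sdiff.1 hk).2
    simp only [Pi.sub_apply]
    linarith
  exact ⟨fun xdag hA hne heq => (hlt xdag hA hne).ne heq.symm, hlt⟩
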